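/- Let q = AB be a query satisfying the zig-zag property and let D be a database with D ⊨ certain(q). Then every repair r of D contains a fact a such that {a} ∈ Δ_2(q,D). -/

import Mathlib

/- Consistent query answering framework: a single relation symbol of arity `n`
   whose first `l` positions form the primary key. Facts are `Fin n → Elem`,
   atoms are `Fin n → Var`. -/

namespace CQA

/-- Key-equality: the tuples of the first `l` entries coincide. -/
def keyEq (l : ℕ) {n : ℕ} {α : Type*} (s t : Fin n → α) : Prop :=
  ∀ i : Fin n, (i : ℕ) < l → s i = t i

/-- The set of entries occurring in the first `l` (key) positions of a tuple. -/
def keySet (l : ℕ) {n : ℕ} {α : Type*} (t : Fin n → α) : Set α :=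
  {x | ∃ i : Fin n, (i : ℕ) < l ∧ t i = x}

/-- The set of all entries of a tuple. -/
def varsSet {n : ℕ} {α : Type*} (t : Fin n → α) : Set α :=
  Set.range t

/-- A (two-atom, Boolean, self-join) query `q = AB` is a pair of atoms. -/
abbrev Query (n : ℕ) (Var : Type*) := (Fin n → Var) × (Fin n → Var)

variable {n : ℕ} {Elem Var : Type*}

/-- The pair of facts `(a, b)` matches the two atoms of `q` via a single assignment `μ`. -/
def solPair (q : Query n Var) (a b : Fin n → Elem) : Prop :=
  ∃ μ : Var → Elem, (∀ i, μ (q.1 i) = a i) ∧ (∀ i, μ (q.2 i) = b i)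

/-- `D ⊨ q(ab)` : `(a,b)` is a solution to `q` in `D`. -/
def Sol (q : Query n Var) (D : Set (Fin n → Elem)) (a b : Fin n → Elem) : Prop :=
  a ∈ D ∧ b ∈ D ∧ solPair q a b

/-- `D ⊨ q{ab}` : `(a,b)` or `(b,a)` is a solution to `q` in `D`. -/
def SolSym (q : Query n Var) (D : Set (Fin n → Elem)) (a b : Fin n → Elem) : Prop :=
  Sol q D a b ∨ Sol q D b a

/-- The set `q(D)` of solutions to `q` in `D`. -/
def solSet (q : Query n Var) (D : Set (Fin n → Elem)) :
    Set ((Fin n → Elem) × (Fin n → Elem)) :=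
  {p | Sol q D p.1 p.2}

/-- `D ⊨ q` : some solution to `q` exists in `D`. -/
def Sat (q : Query n Var) (D : Set (Fin n → Elem)) : Prop :=
  ∃ a b, Sol q D a b

/-- A database is consistent if it contains no two distinct key-equal facts. -/
def Consistent (l : ℕ) (D : Set (Fin n → Elem)) : Prop :=
  ∀ a ∈ D, ∀ b ∈ D, keyEq l a b → a = b

/-- `r` is a repair of `D` : a maximal consistent subset of `D`. -/
def Repair (l : ℕ) (D r : Set (Fin n → Elem)) : Prop :=
  r ⊆ D ∧ Consistent l r ∧ ∀ s, r ⊆ s → s ⊆ D → Consistent l s → s = r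

/-- `D ⊨ certain(q)` : all repairs of `D` satisfy `q`. -/
def Certain (l : ℕ) (q : Query n Var) (D : Set (Fin n → Elem)) : Prop :=
  ∀ r, Repair l D r → Sat q r

/-- The block of the fact `a` in `D`: all facts of `D` key-equal to `a`. -/
def Block (l : ℕ) (D : Set (Fin n → Elem)) (a : Fin n → Elem) : Set (Fin n → Elem) :=
  {b ∈ D | keyEq l a b}

/-- A `k`-set of `D`: at most `k` facts of `D`, at most one from each block. -/
def kSet (l k : ℕ) (D S : Set (Fin n → Elem)) : Prop :=
  S ⊆ D ∧ S.Finite ∧ S.ncard ≤ k ∧ Consistent l S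

/-- A collection `𝒮` of sets of facts is closed under the two rules defining `Δ_k(q,D)`:
  (i) every `k`-set satisfying `q` is in `𝒮`, and (ii) if for a `k`-set `S` there is
  a block of `D` each of whose facts `u` admits a subset `S' ⊆ S ∪ {u}` that is a
  `k`-set belonging to `𝒮`, then `S ∈ 𝒮`. -/
def DeltaClosed (l k : ℕ) (q : Query n Var) (D : Set (Fin n → Elem))
    (𝒮 : Set (Set (Fin n → Elem))) : Prop :=
  (∀ S, kSet l k D S → Sat q S → S ∈ 𝒮) ∧
  (∀ S, kSet l k D S → (∃ x ∈ D, ∀ u ∈ D, keyEq l x u →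
      ∃ S', S' ⊆ S ∪ {u} ∧ kSet l k D S' ∧ S' ∈ 𝒮) → S ∈ 𝒮)

/-- `Δ_k(q,D)`: the least collection of `k`-sets of `D` closed under the two rules
(the intersection of all closed collections). -/
def Delta (l k : ℕ) (q : Query n Var) (D : Set (Fin n → Elem)) :
    Set (Set (Fin n → Elem)) :=
  ⋂₀ {𝒮 | DeltaClosed l k q D 𝒮}

/-- `q = AB` is 2way-determined. -/
def TwoWayDet (l : ℕ) (q : Query n Var) : Prop :=
  ¬ keySet l q.1 ⊆ keySet l q.2 ∧ ¬ keySet l q.2 ⊆ keySet l q.1 ∧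
  keySet l q.1 ⊆ varsSet q.2 ∧ keySet l q.2 ⊆ varsSet q.1

/-- The zig-zag property of a query `q`, relative to databases over `Elem`. -/
def ZigZag (l : ℕ) (q : Query n Var) (Elem : Type*) : Prop :=
  ∀ D : Set (Fin n → Elem), D.Finite →
    ∀ a b b' c : Fin n → Elem, a ∈ D → b ∈ D → b' ∈ D → c ∈ D →
      ¬ keyEq l a c → a ≠ b → keyEq l b b' →
      Sol q D a b → Sol q D c b' → Sol q D a b'

/-- `rkey(a, r)`: facts of `r` whose key entries are included in those of `a`. -/
def rkey (l : ℕ) (r : Set (Fin n → Elem)) (a : Fin n → Elem) : Set (Fin n → Elem) :=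
  {c ∈ r | keySet l c ⊆ keySet l a}

open Classical in
/-- `g(e)`, the set of entries of the tuple `g̅(e)`, for `e` branching with `d, f`. -/
noncomputable def gSet (l : ℕ) (d e f : Fin n → Elem) : Set Elem :=
  if keySet l d ⊆ keySet l e ∧ ¬ keySet l f ⊆ keySet l e then keySet l d
  else if ¬ keySet l d ⊆ keySet l e ∧ keySet l f ⊆ keySet l e then keySet l f
  else if keySet l d ⊆ keySet l f ∧ keySet l f ⊆ keySet l e then keySet l d
  else if keySet l f ⊆ keySet l d ∧ keySet l d ⊆ keySet l e then keySet l f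
  else keySet l e

/-- A tripath of `q`: a database `Θ`, each of whose blocks has at most two facts,
whose blocks (indexed by `Fin m`) are arranged as a rooted tree with exactly one root
block and exactly two leaf blocks; the root block has the single fact `a(root)`, leaf
blocks have the single fact `b(leaf)`, all other blocks have exactly the two facts
`a(B) ≠ b(B)`; if `B` is the parent of `B'` then `Θ ⊨ q{a(B) b(B')}`; the (unique)
branching block `B` with its two children `B', B''` gives the center `d e f` =
`b(B') a(B) b(B'')` with `(d,e)` and `(e,f)` distinct solutions; and `g(e)` is not
included in the key of the root fact nor of either leaf fact. -/
structure Tripath (l : ℕ) (q : Query n Var) (Θ : Set (Fin n → Elem)) where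
  finite : Θ.Finite
  m : ℕ
  blk : Fin m → Set (Fin n → Elem)
  blk_is_block : ∀ i, ∃ x ∈ Θ, blk i = Block l Θ x
  blk_cover : Θ = ⋃ i, blk i
  blk_inj : Function.Injective blk
  blk_card : ∀ i, (blk i).ncard ≤ 2
  parent : Fin m → Option (Fin m)
  root : Fin m
  parent_root : parent root = none
  parent_ne_root : ∀ i, i ≠ root → ∃ j, parent i = some j
  reach_root : ∀ i, Relation.ReflTransGen (fun x y => parent x = some y) i root
  leaf1 : Fin m
  leaf2 : Fin m
  leaf_ne : leaf1 ≠ leaf2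
  leaf1_leaf : ∀ j, parent j ≠ some leaf1
  leaf2_leaf : ∀ j, parent j ≠ some leaf2
  leaves_eq : ∀ i, (∀ j, parent j ≠ some i) → i = leaf1 ∨ i = leaf2
  aFact : Fin m → (Fin n → Elem)
  bFact : Fin m → (Fin n → Elem)
  root_blk : blk root = {aFact root}
  leaf1_blk : blk leaf1 = {bFact leaf1}
  leaf2_blk : blk leaf2 = {bFact leaf2}
  other_blk : ∀ i, i ≠ root → i ≠ leaf1 → i ≠ leaf2 →
    aFact i ≠ bFact i ∧ blk i = {aFact i, bFact i}
  adj_sol : ∀ i j, parent j = some i → SolSym q Θ (aFact i) (bFact j)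
  branch : Fin m
  child1 : Fin m
  child2 : Fin m
  child_ne : child1 ≠ child2
  parent_child1 : parent child1 = some branch
  parent_child2 : parent child2 = some branch
  center_sol1 : Sol q Θ (bFact child1) (aFact branch)
  center_sol2 : Sol q Θ (aFact branch) (bFact child2)
  center_distinct : (bFact child1, aFact branch) ≠ (aFact branch, bFact child2)
  g_root : ¬ gSet l (bFact child1) (aFact branch) (bFact child2) ⊆ keySet l (aFact root)
  g_leaf1 : ¬ gSet l (bFact child1) (aFact branch) (bFact child2) ⊆ keySet l (bFact leaf1)
  g_leaf2 : ¬ gSet l (bFact child1) (aFact branch) (bFact child2) ⊆ keySet l (bFact leaf2)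

namespace Tripath

variable {l : ℕ} {q : Query n Var} {Θ : Set (Fin n → Elem)}

/-- The fact `d` of the center `def` of a tripath. -/
def dc (T : Tripath l q Θ) : Fin n → Elem := T.bFact T.child1
/-- The fact `e` of the center `def` of a tripath. -/
def ec (T : Tripath l q Θ) : Fin n → Elem := T.aFact T.branch
/-- The fact `f` of the center `def` of a tripath. -/
def fc (T : Tripath l q Θ) : Fin n → Elem := T.bFact T.child2
/-- The root fact `u₀` of a tripath. -/
def u0 (T : Tripath l q Θ) : Fin n → Elem := T.aFact T.root
/-- The leaf fact `u₁` of a tripath. -/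
def u1 (T : Tripath l q Θ) : Fin n → Elem := T.bFact T.leaf1
/-- The leaf fact `u₂` of a tripath. -/
def u2 (T : Tripath l q Θ) : Fin n → Elem := T.bFact T.leaf2

/-- The center of the tripath is a fork (`(f,d)` is not a solution). -/
def IsFork (T : Tripath l q Θ) : Prop := ¬ Sol q Θ T.fc T.dc

/-- The center of the tripath is a triangle (`(f,d)` is a solution). -/
def IsTriangle (T : Tripath l q Θ) : Prop := Sol q Θ T.fc T.dc

/-- Variable-niceness witnessed by the elements `x, y, z`. -/
def VariableNiceWith (T : Tripath l q Θ) (x y z : Elem) : Prop :=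
  x ∈ keySet l T.dc ∧ y ∈ keySet l T.ec ∧ z ∈ keySet l T.fc ∧
  ({x, y, z} : Set Elem) ∩ (keySet l T.u0 ∪ keySet l T.u1 ∪ keySet l T.u2) = ∅

/-- The tripath is variable-nice. -/
def VariableNice (T : Tripath l q Θ) : Prop := ∃ x y z, T.VariableNiceWith x y z

/-- The tripath is solution-nice: the only solutions to `q` in `Θ` are those between a
parent block and a child block, plus possibly `(f, d)`. -/
def SolutionNice (T : Tripath l q Θ) : Prop :=
  ∀ a b, Sol q Θ a b →
    (∃ i j, T.parent j = some i ∧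
      ((a = T.aFact i ∧ b = T.bFact j) ∨ (a = T.bFact j ∧ b = T.aFact i)))
    ∨ (a = T.fc ∧ b = T.dc)

/-- The tripath is nice. -/
def Nice (T : Tripath l q Θ) : Prop :=
  (∃ x y z : Elem, T.VariableNiceWith x y z ∧
    ∃ w ∈ ({x, y, z} : Set Elem),
      ∀ c ∈ Θ, c ≠ T.u0 → c ≠ T.u1 → c ≠ T.u2 → w ∈ keySet l c) ∧
  T.SolutionNice ∧
  (∀ u ∈ ({T.u0, T.u1, T.u2} : Set (Fin n → Elem)),
    ∃ w ∈ keySet l u, ∀ c ∈ Θ, c ≠ u → w ∉ keySet l c)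

end Tripath

/-- `D` contains a tripath of `q`: some subset of `D` is a tripath of `q`. -/
def ContainsTripath (l : ℕ) (q : Query n Var) (D : Set (Fin n → Elem)) : Prop :=
  ∃ Θ ⊆ D, Nonempty (Tripath l q Θ)

/-- `q` admits a fork-tripath (over databases with elements in `Elem`). -/
def AdmitsForkTripath (l : ℕ) (q : Query n Var) (Elem : Type*) : Prop :=
  ∃ D : Set (Fin n → Elem), D.Finite ∧ ∃ Θ ⊆ D, ∃ T : Tripath l q Θ, T.IsFork

/-- `q` admits a triangle-tripath (over databases with elements in `Elem`). -/
def AdmitsTriangleTripath (l : ℕ) (q : Query n Var) (Elem : Type*) : Prop :=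
  ∃ D : Set (Fin n → Elem), D.Finite ∧ ∃ Θ ⊆ D, ∃ T : Tripath l q Θ, T.IsTriangle

/-- `q` admits a tripath (over databases with elements in `Elem`). -/
def AdmitsTripath (l : ℕ) (q : Query n Var) (Elem : Type*) : Prop :=
  ∃ D : Set (Fin n → Elem), D.Finite ∧ ContainsTripath l q D

/-- Edges of the solution graph `G(D,q)`: distinct facts `a, b` of `D` with `D ⊨ q{ab}`. -/
def gEdge (q : Query n Var) (D : Set (Fin n → Elem)) (a b : Fin n → Elem) : Prop :=
  a ≠ b ∧ a ∈ D ∧ b ∈ D ∧ SolSym q D a b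

/-- The connected component of the fact `a` in the solution graph `G(D,q)`. -/
def gComp (q : Query n Var) (D : Set (Fin n → Elem)) (a : Fin n → Elem) :
    Set (Fin n → Elem) :=
  {b ∈ D | Relation.ReflTransGen (gEdge q D) a b}

/-- `C` is a quasi-clique (of the solution graph of `D`): any two non-key-equal facts of
`C` are joined by an edge. -/
def QuasiClique (l : ℕ) (q : Query n Var) (D : Set (Fin n → Elem))
    (C : Set (Fin n → Elem)) : Prop :=
  ∀ a ∈ C, ∀ b ∈ C, ¬ keyEq l a b → SolSym q D a b

open Classical in
/-- `clique(a)`: the connected component of `a` in `G(D,q)` if it is a quasi-clique, and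
`{a}` otherwise. -/
noncomputable def cliqueOf (l : ℕ) (q : Query n Var) (D : Set (Fin n → Elem))
    (a : Fin n → Elem) : Set (Fin n → Elem) :=
  if QuasiClique l q D (gComp q D a) then gComp q D a else {a}

/-- Edges of the bipartite graph `H(D,q)`: between a block `B` of `D` and a set `c` of
the form `clique(y)`, when `B` contains a fact `a ∈ c` with `(a,a)` not a solution. -/
def HEdge (l : ℕ) (q : Query n Var) (D : Set (Fin n → Elem))
    (B c : Set (Fin n → Elem)) : Prop :=
  (∃ x ∈ D, B = Block l D x) ∧ (∃ y ∈ D, c = cliqueOf l q D y) ∧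
  ∃ a ∈ B, a ∈ c ∧ ¬ Sol q D a a

/-- `H(D,q)` admits a matching saturating the set `V₁` of blocks of `D`: an injective
assignment of an `H`-edge to every block. -/
def SaturatingMatching (l : ℕ) (q : Query n Var) (D : Set (Fin n → Elem)) : Prop :=
  ∃ M : Set (Fin n → Elem) → Set (Fin n → Elem),
    (∀ x ∈ D, HEdge l q D (Block l D x) (M (Block l D x))) ∧
    (∀ x ∈ D, ∀ y ∈ D, M (Block l D x) = M (Block l D y) → Block l D x = Block l D y)

/-- `D` is a clique-database for `q`: every connected component of `G(D,q)` is a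
quasi-clique. -/
def CliqueDB (l : ℕ) (q : Query n Var) (D : Set (Fin n → Elem)) : Prop :=
  ∀ a ∈ D, QuasiClique l q D (gComp q D a)

/-- `q` is a clique-query: every database (over `Elem`) is a clique-database for `q`. -/
def CliqueQuery (l : ℕ) (q : Query n Var) (Elem : Type*) : Prop :=
  ∀ D : Set (Fin n → Elem), D.Finite → CliqueDB l q D

/-- One step of `q`-connectedness between (the blocks of) two facts of `D`:
either they are in the same block, or some fact of the block of `x` and some fact
of the block of `y` form a solution. -/
def qConnRel (l : ℕ) (q : Query n Var) (D : Set (Fin n → Elem))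
    (x y : Fin n → Elem) : Prop :=
  keyEq l x y ∨ ∃ a b, a ∈ Block l D x ∧ b ∈ Block l D y ∧ SolSym q D a b

/-- The blocks of `x` and of `y` are `q`-connected in `D`
(reflexive-symmetric-transitive closure). -/
def qConn (l : ℕ) (q : Query n Var) (D : Set (Fin n → Elem))
    (x y : Fin n → Elem) : Prop :=
  Relation.EqvGen (qConnRel l q D) x y

/-- The `q`-connected component of (the block of) the fact `x` in `D`. -/
def qComponent (l : ℕ) (q : Query n Var) (D : Set (Fin n → Elem))
    (x : Fin n → Elem) : Set (Fin n → Elem) :=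
  {y ∈ D | qConn l q D x y}

end CQA

/-!
Call a fact `a` free if `{a} ∉ Δ₂(q,D)`. If every fact of `r` were free, we could build, block by
block, a repair of `D` made of free facts that does not satisfy `q`, contradicting certainty. The
invariant is that every chosen fact `p` is guarded: every free `c ≁ p` with `q(cp)` is key-equal
to a chosen `g` with `¬ q(gp)`. Rule (ii) of `Δ₂`, read contrapositively, picks in any block a
fact `u` such that no 2-set inside `S ∪ {u}` lies in `Δ₂`, for a given 2-set `S ∉ Δ₂`; so `u` is
free and `¬ q(su)` for `s ∈ S`.

The sources of a block are the free facts outside it forming a solution with one of its facts.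
A new block can be filled at once if it has no sources, if its sources meet two blocks (choose
`u` against one source `c₁`; zig-zag turns any solution `q(cu)` into `q(c₁u)`), or if they all
lie in an already filled block. Otherwise the sources of every unfilled block lie in a single
unfilled block; iterating this map leads to a cycle of blocks, filled backwards by a chain of free
facts without solutions between neighbours, which closes up because `{w₀, wₖ} ∉ Δ₂` is kept
along the chain.
-/

namespace CQA

variable {n l k : ℕ} {Elem Var : Type*} {q : Query n Var} {D P W S : Set (Fin n → Elem)}
  {a b c g u x y : Fin n → Elem}

theorem keyEq_refl (a : Fin n → Elem) : keyEq l a a := fun _ _ => rfl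

theorem keyEq.symm (h : keyEq l a b) : keyEq l b a := fun i hi => (h i hi).symm

theorem keyEq.trans (h₁ : keyEq l a b) (h₂ : keyEq l b c) : keyEq l a c :=
  fun i hi => (h₁ i hi).trans (h₂ i hi)

theorem kSet_singleton (hk : 1 ≤ k) (ha : a ∈ D) : kSet l k D {a} :=
  ⟨Set.singleton_subset_iff.2 ha, Set.finite_singleton a, by simpa using hk,
    fun _ hx _ hy _ => hx.trans hy.symm⟩

theorem kSet_pair (hk : 2 ≤ k) (ha : a ∈ D) (hb : b ∈ D) (hab : keyEq l a b → a = b) :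
    kSet l k D {a, b} := by
  refine ⟨Set.insert_subset ha (Set.singleton_subset_iff.2 hb), Set.toFinite _,
    (Set.ncard_insert_le a {b}).trans (by simpa using hk), ?_⟩
  rintro x (rfl | rfl) y (rfl | rfl) hxy
  exacts [rfl, hab hxy, (hab hxy.symm).symm, rfl]

theorem mem_delta_of_sat (hS : kSet l k D S) (h : Sat q S) : S ∈ Delta l k q D :=
  Set.mem_sInter.2 fun _ h𝒮 => h𝒮.1 S hS h

theorem exists_keyEq_forall_notMem_delta (hS : kSet l k D S) (h : S ∉ Delta l k q D)
    (hx : x ∈ D) :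
    ∃ u ∈ D, keyEq l x u ∧ ∀ S' ⊆ S ∪ {u}, kSet l k D S' → S' ∉ Delta l k q D := by
  by_contra! hall
  refine h (Set.mem_sInter.2 fun 𝒮 h𝒮 => h𝒮.2 S hS ⟨x, hx, fun u hu hxu => ?_⟩)
  obtain ⟨S', hS'u, hS', hΔ⟩ := hall u hu hxu
  exact ⟨S', hS'u, hS', Set.mem_sInter.1 hΔ 𝒮 h𝒮⟩

theorem not_solPair_of_pair_notMem_delta (ha : a ∈ D) (hb : b ∈ D) (hab : keyEq l a b → a = b)
    (h : {a, b} ∉ Delta l 2 q D) : ¬ solPair q a b := fun hsol =>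
  h (mem_delta_of_sat (kSet_pair le_rfl ha hb hab)
    ⟨a, b, Set.mem_insert a _, Set.mem_insert_of_mem a rfl, hsol⟩)

theorem ZigZag.solPair_of_solPair (hzz : ZigZag l q Elem) (hac : ¬ keyEq l a c) (hab : a ≠ b)
    {b' : Fin n → Elem} (hbb' : keyEq l b b') (h₁ : solPair q a b) (h₂ : solPair q c b') :
    solPair q a b' :=
  (hzz {a, b, b', c} (Set.toFinite _) a b b' c (by simp) (by simp) (by simp) (by simp) hac hab
    hbb' ⟨by simp, by simp, h₁⟩ ⟨by simp, by simp, h₂⟩).2.2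

def freeFacts (l : ℕ) (q : Query n Var) (D : Set (Fin n → Elem)) : Set (Fin n → Elem) :=
  {a ∈ D | {a} ∉ Delta l 2 q D}

theorem not_solPair_self_of_mem_freeFacts (ha : a ∈ freeFacts l q D) : ¬ solPair q a a :=
  not_solPair_of_pair_notMem_delta ha.1 ha.1 (fun _ => rfl)
    (by rw [Set.pair_eq_singleton]; exact ha.2)

theorem exists_keyEq_pair_notMem_delta (hS : kSet l 2 D S) (h : S ∉ Delta l 2 q D) (hy : y ∈ D) :
    ∃ u ∈ freeFacts l q D, keyEq l y u ∧ ∀ s ∈ S, ¬ keyEq l s u → {s, u} ∉ Delta l 2 q D := by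
  obtain ⟨u, hu, hyu, hS'⟩ := exists_keyEq_forall_notMem_delta hS h hy
  refine ⟨u, ⟨hu, hS' {u} Set.subset_union_right (kSet_singleton one_le_two hu)⟩, hyu,
    fun s hs hsu => ?_⟩
  exact hS' {s, u} (Set.insert_subset (Or.inl hs) Set.subset_union_right)
    (kSet_pair le_rfl (hS.1 hs) hu (absurd · hsu))

theorem exists_mem_freeFacts_keyEq (hx : x ∈ freeFacts l q D) (hy : y ∈ D) :
    ∃ u ∈ freeFacts l q D, keyEq l y u :=
  let ⟨u, hu, hyu, _⟩ := exists_keyEq_pair_notMem_delta (kSet_singleton one_le_two hx.1) hx.2 hy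
  ⟨u, hu, hyu⟩

theorem exists_keyEq_not_solPair (hx : x ∈ freeFacts l q D) (hy : y ∈ D) (hxy : ¬ keyEq l x y) :
    ∃ u ∈ freeFacts l q D, keyEq l y u ∧ ¬ solPair q x u := by
  obtain ⟨u, hu, hyu, hpair⟩ :=
    exists_keyEq_pair_notMem_delta (kSet_singleton one_le_two hx.1) hx.2 hy
  have hxu : ¬ keyEq l x u := fun h => hxy (h.trans hyu.symm)
  exact ⟨u, hu, hyu, not_solPair_of_pair_notMem_delta hx.1 hu.1 (absurd · hxu) (hpair x rfl hxu)⟩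

def sources (l : ℕ) (q : Query n Var) (D : Set (Fin n → Elem)) (y : Fin n → Elem) :
    Set (Fin n → Elem) :=
  {c ∈ freeFacts l q D | ¬ keyEq l c y ∧ ∃ y' ∈ Block l D y, solPair q c y'}

theorem mem_sources (hc : c ∈ freeFacts l q D) (hcu : ¬ keyEq l c u) (hu : u ∈ D)
    (hyu : keyEq l y u) (h : solPair q c u) : c ∈ sources l q D y :=
  ⟨hc, fun hcy => hcu (hcy.trans hyu), u, ⟨hu, hyu⟩, h⟩

theorem ZigZag.solPair_of_two_sources (hzz : ZigZag l q Elem) {c₁ c₂ : Fin n → Elem}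
    (h₁ : c₁ ∈ sources l q D y) (h₂ : c₂ ∈ sources l q D y) (h₁₂ : ¬ keyEq l c₁ c₂)
    (hyu : keyEq l y u) (h : solPair q c u) : solPair q c₁ u := by
  have hzz' : ∀ {a c}, a ∈ sources l q D y → ¬ keyEq l a c → solPair q c u → solPair q a u := by
    rintro a c ⟨-, hay, y', ⟨-, hyy'⟩, hsol⟩ hac hc
    refine hzz.solPair_of_solPair hac ?_ (hyy'.symm.trans hyu) hsol hc
    rintro rfl
    exact hay hyy'.symm
  by_cases hc₁c : keyEq l c₁ c
  · exact hzz' h₁ h₁₂ (hzz' h₂ (fun h => h₁₂ (hc₁c.trans h.symm)) h)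
  · exact hzz' h₁ hc₁c h

def Guarded (l : ℕ) (q : Query n Var) (D P : Set (Fin n → Elem)) (p : Fin n → Elem) : Prop :=
  ∀ c ∈ freeFacts l q D, ¬ keyEq l c p → solPair q c p → ∃ g ∈ P, keyEq l c g ∧ ¬ solPair q g p

def GuardedSelection (l : ℕ) (q : Query n Var) (D P : Set (Fin n → Elem)) : Prop :=
  P ⊆ freeFacts l q D ∧ Consistent l P ∧ ∀ p ∈ P, Guarded l q D P p

def Unrepresented (l : ℕ) (D P : Set (Fin n → Elem)) (y : Fin n → Elem) : Prop :=
  y ∈ D ∧ ∀ p ∈ P, ¬ keyEq l y p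

theorem Guarded.mono (h : Guarded l q D P u) (hPW : P ⊆ W) : Guarded l q D W u :=
  fun c hc hcu hsol =>
    let ⟨g, hg, hcg, hgu⟩ := h c hc hcu hsol
    ⟨g, hPW hg, hcg, hgu⟩

theorem guarded_of_forall_sources_keyEq (hu : u ∈ D) (hyu : keyEq l y u) (hg : g ∈ P)
    (hgu : ¬ solPair q g u) (hcov : ∀ c ∈ sources l q D y, keyEq l c g) : Guarded l q D P u :=
  fun c hc hcu hsol => ⟨g, hg, hcov c (mem_sources hc hcu hu hyu hsol), hgu⟩

theorem GuardedSelection.union (hP : GuardedSelection l q D P) (hW : W ⊆ freeFacts l q D)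
    (hWc : Consistent l W) (hnew : ∀ w ∈ W, ∀ p ∈ P, ¬ keyEq l w p)
    (hguard : ∀ w ∈ W, Guarded l q D (P ∪ W) w) : GuardedSelection l q D (P ∪ W) := by
  refine ⟨Set.union_subset hP.1 hW, ?_, ?_⟩
  · rintro a (ha | ha) b (hb | hb) hab
    · exact hP.2.1 a ha b hb hab
    · exact absurd hab.symm (hnew b hb a ha)
    · exact absurd hab (hnew a ha b hb)
    · exact hWc a ha b hb hab
  · rintro p (hp | hp)
    · exact (hP.2.2 p hp).mono Set.subset_union_left
    · exact hguard p hp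

theorem ssubset_union_of_forall_not_keyEq (hu : u ∈ W) (hnew : ∀ p ∈ P, ¬ keyEq l u p) :
    P ⊂ P ∪ W :=
  Set.ssubset_union_left_iff.2 fun hWP => hnew u (hWP hu) (keyEq_refl u)

theorem GuardedSelection.not_sat (hP : GuardedSelection l q D P) : ¬ Sat q P := by
  rintro ⟨a, b, ha, hb, hab⟩
  by_cases hkey : keyEq l a b
  · obtain rfl := hP.2.1 a ha b hb hkey
    exact not_solPair_self_of_mem_freeFacts (hP.1 ha) hab
  · obtain ⟨g, hg, hag, hgb⟩ := hP.2.2 b hb a (hP.1 ha) hkey hab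
    obtain rfl := hP.2.1 a ha g hg hag
    exact hgb hab

theorem exists_guarded_or_forall_sources_keyEq (hzz : ZigZag l q Elem)
    (hx : x ∈ freeFacts l q D) (hP : GuardedSelection l q D P) (hy : Unrepresented l D P y) :
    (∃ u ∈ freeFacts l q D, keyEq l y u ∧ Guarded l q D (P ∪ {u}) u) ∨
      ∃ v, Unrepresented l D P v ∧ ∀ c ∈ sources l q D y, keyEq l c v := by
  rcases (sources l q D y).eq_empty_or_nonempty with hnone | ⟨c₁, hc₁⟩
  · obtain ⟨u, hu, hyu⟩ := exists_mem_freeFacts_keyEq hx hy.1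
    refine Or.inl ⟨u, hu, hyu, fun c hc hcu hsol => ?_⟩
    exact absurd (mem_sources hc hcu hu.1 hyu hsol) (hnone ▸ Set.notMem_empty c)
  by_cases htwo : ∃ c₂ ∈ sources l q D y, ¬ keyEq l c₁ c₂
  · obtain ⟨c₂, hc₂, h₁₂⟩ := htwo
    obtain ⟨u, hu, hyu, hc₁u⟩ := exists_keyEq_not_solPair hc₁.1 hy.1 hc₁.2.1
    exact Or.inl ⟨u, hu, hyu, fun c _ _ hsol =>
      absurd (hzz.solPair_of_two_sources hc₁ hc₂ h₁₂ hyu hsol) hc₁u⟩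
  push Not at htwo
  by_cases hrep : ∃ p ∈ P, keyEq l c₁ p
  · obtain ⟨p, hp, hc₁p⟩ := hrep
    obtain ⟨u, hu, hyu, hpu⟩ :=
      exists_keyEq_not_solPair (hP.1 hp) hy.1 fun h => hy.2 p hp h.symm
    exact Or.inl ⟨u, hu, hyu, guarded_of_forall_sources_keyEq hu.1 hyu (Or.inl hp) hpu
      fun c hc => (htwo c hc).symm.trans hc₁p⟩
  · push Not at hrep
    exact Or.inr ⟨c₁, ⟨hc₁.1.1, hrep⟩, fun c hc => (htwo c hc).symm⟩

/-- The invariant `{w 0, w N} ∉ Δ₂` is what lets the chain be extended, and closed into a cycle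
in `GuardedSelection.exists_ssuperset_of_cycle`. -/
theorem exists_free_chain (hx : x ∈ freeFacts l q D) (d : ℕ → Fin n → Elem) (N : ℕ)
    (hd : ∀ k ≤ N, d k ∈ D) (hdist : ∀ i ≤ N, ∀ j ≤ N, keyEq l (d i) (d j) → i = j) :
    ∃ w : ℕ → Fin n → Elem, (∀ k ≤ N, w k ∈ freeFacts l q D ∧ keyEq l (d k) (w k)) ∧
      (∀ k < N, ¬ solPair q (w k) (w (k + 1))) ∧ {w 0, w N} ∉ Delta l 2 q D := by
  induction N with
  | zero =>
    obtain ⟨u, hu, hdu⟩ := exists_mem_freeFacts_keyEq hx (hd 0 le_rfl)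
    refine ⟨fun _ => u, fun k hk => ?_, fun k hk => absurd hk k.not_lt_zero, ?_⟩
    · obtain rfl := Nat.le_zero.1 hk
      exact ⟨hu, hdu⟩
    · rw [Set.pair_eq_singleton]
      exact hu.2
  | succ N ih =>
    obtain ⟨w, hw, hsol, hΔ⟩ := ih (fun k hk => hd k (by omega))
      (fun i hi j hj => hdist i (by omega) j (by omega))
    have hnew : ∀ k ≤ N, ∀ v, keyEq l (d (N + 1)) v → ¬ keyEq l (w k) v := fun k hk v hv h => by
      have := hdist k (by omega) (N + 1) le_rfl (((hw k hk).2.trans h).trans hv.symm)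
      omega
    have hS : kSet l 2 D {w 0, w N} := kSet_pair le_rfl (hw 0 (by omega)).1.1 (hw N le_rfl).1.1
      fun h => by
        obtain rfl : 0 = N :=
          hdist 0 (by omega) N (by omega) (((hw 0 (by omega)).2.trans h).trans (hw N le_rfl).2.symm)
        rfl
    obtain ⟨u, hu, hdu, hpair⟩ := exists_keyEq_pair_notMem_delta hS hΔ (hd (N + 1) le_rfl)
    refine ⟨Function.update w (N + 1) u, fun k hk => ?_, fun k hk => ?_, ?_⟩
    · rcases hk.lt_or_eq with hk | rfl
      · rw [Function.update_of_ne (by omega)]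
        exact hw k (by omega)
      · rw [Function.update_self]
        exact ⟨hu, hdu⟩
    · rw [Function.update_of_ne (by omega)]
      rcases (Nat.lt_succ_iff.1 hk).lt_or_eq with hk | rfl
      · rw [Function.update_of_ne (by omega)]
        exact hsol k hk
      · rw [Function.update_self]
        exact not_solPair_of_pair_notMem_delta (hw k le_rfl).1.1 hu.1
          (absurd · (hnew k le_rfl u hdu)) (hpair _ (Or.inr rfl) (hnew k le_rfl u hdu))
    · rw [Function.update_of_ne (by omega), Function.update_self]
      exact hpair _ (Or.inl rfl) (hnew 0 (by omega) u hdu)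

theorem GuardedSelection.exists_ssuperset_of_cycle (hP : GuardedSelection l q D P)
    (hx : x ∈ freeFacts l q D) (d : ℕ → Fin n → Elem) (N : ℕ)
    (hd : ∀ k ≤ N, Unrepresented l D P (d k))
    (hdist : ∀ i ≤ N, ∀ j ≤ N, keyEq l (d i) (d j) → i = j)
    (hsrc : ∀ k < N, ∀ c ∈ sources l q D (d (k + 1)), keyEq l c (d k))
    (hsrc₀ : ∀ c ∈ sources l q D (d 0), keyEq l c (d N)) :
    ∃ P', GuardedSelection l q D P' ∧ P ⊂ P' := by
  obtain ⟨w, hw, hsol, hΔ⟩ := exists_free_chain hx d N (fun k hk => (hd k hk).1) hdist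
  have hwD : ∀ k ≤ N, w k ∈ D := fun k hk => (hw k hk).1.1
  have hwdist : ∀ i ≤ N, ∀ j ≤ N, keyEq l (w i) (w j) → i = j := fun i hi j hj h =>
    hdist i hi j hj (((hw i hi).2.trans h).trans (hw j hj).2.symm)
  have hwnew : ∀ k ≤ N, ∀ p ∈ P, ¬ keyEq l (w k) p := fun k hk p hp h =>
    (hd k hk).2 p hp ((hw k hk).2.trans h)
  set W := w '' Set.Iic N
  have hwW : ∀ k ≤ N, w k ∈ P ∪ W := fun k hk => Or.inr ⟨k, hk, rfl⟩
  have hguard : ∀ k ≤ N, Guarded l q D (P ∪ W) (w k) := by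
    rintro (_ | k) hk
    · have hN0 : ¬ solPair q (w N) (w 0) := by
        rw [Set.pair_comm] at hΔ
        refine not_solPair_of_pair_notMem_delta (hwD N le_rfl) (hwD 0 hk) (fun h => ?_) hΔ
        obtain rfl : N = 0 := hwdist N le_rfl 0 hk h
        rfl
      exact guarded_of_forall_sources_keyEq (hwD 0 hk) (hw 0 hk).2 (hwW N le_rfl) hN0
        fun c hc => (hsrc₀ c hc).trans (hw N le_rfl).2
    · exact guarded_of_forall_sources_keyEq (hwD _ hk) (hw _ hk).2 (hwW k (by omega)) (hsol k hk)
        fun c hc => (hsrc k hk c hc).trans (hw k (by omega)).2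
  refine ⟨P ∪ W, hP.union ?_ ?_ ?_ ?_, ssubset_union_of_forall_not_keyEq ⟨0, N.zero_le, rfl⟩
    (hwnew 0 N.zero_le)⟩
  · rintro _ ⟨k, hk, rfl⟩
    exact (hw k hk).1
  · rintro _ ⟨i, hi, rfl⟩ _ ⟨j, hj, rfl⟩ h
    rw [hwdist i hi j hj h]
  · rintro _ ⟨k, hk, rfl⟩
    exact hwnew k hk
  · rintro _ ⟨k, hk, rfl⟩
    exact hguard k hk

theorem exists_first_repeat {α : Type*} {r : α → α → Prop} (hr : ∀ a, r a a) {f : ℕ → α}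
    {s : Set α} (hf : ∀ t, f t ∈ s) (hs : s.Finite) :
    ∃ i j, i < j ∧ r (f i) (f j) ∧ ∀ a b, a < b → b < j → ¬ r (f a) (f b) := by
  classical
  have hex : ∃ j, ∃ i < j, r (f i) (f j) := by
    obtain ⟨i, j, hij, heq⟩ := hs.exists_lt_map_eq_of_forall_mem hf
    exact ⟨j, i, hij, heq ▸ hr _⟩
  obtain ⟨i, hij, hrij⟩ := Nat.find_spec hex
  exact ⟨i, Nat.find hex, hij, hrij, fun a b hab hbj hrab => Nat.find_min hex hbj ⟨a, hab, hrab⟩⟩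

/-- The `σ`-orbit of `y` runs into a cycle of blocks; read backwards, it is a cycle as in
`GuardedSelection.exists_ssuperset_of_cycle`. -/
theorem GuardedSelection.exists_ssuperset_of_forall_sources_keyEq (hD : D.Finite)
    (hP : GuardedSelection l q D P) (hx : x ∈ freeFacts l q D) (hy : Unrepresented l D P y)
    (σ : (Fin n → Elem) → Fin n → Elem)
    (hσ : ∀ y, Unrepresented l D P y → Unrepresented l D P (σ y))
    (hσsrc : ∀ y, Unrepresented l D P y → ∀ c ∈ sources l q D y, keyEq l c (σ y)) :
    ∃ P', GuardedSelection l q D P' ∧ P ⊂ P' := by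
  have horb : ∀ t, Unrepresented l D P (σ^[t] y) := by
    intro t
    induction t with
    | zero => exact hy
    | succ t ih => rw [Function.iterate_succ_apply']; exact hσ _ ih
  have hsucc : ∀ t, ∀ c ∈ sources l q D (σ^[t] y), keyEq l c (σ^[t + 1] y) := fun t c hc => by
    rw [Function.iterate_succ_apply']
    exact hσsrc _ (horb t) c hc
  obtain ⟨i, j, hij, hrij, hmin⟩ := exists_first_repeat (r := keyEq l)
    (s := {z | Unrepresented l D P z}) keyEq_refl horb (hD.subset fun z hz => hz.1)
  refine hP.exists_ssuperset_of_cycle hx (fun k => σ^[j - 1 - k] y) (j - 1 - i)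
    (fun k _ => horb _) (fun a ha b hb h => ?_) (fun k hk c hc => ?_) (fun c hc => ?_)
  · by_contra hab
    rcases Nat.lt_or_gt_of_ne hab with hab | hab
    · exact hmin (j - 1 - b) (j - 1 - a) (by omega) (by omega) h.symm
    · exact hmin (j - 1 - a) (j - 1 - b) (by omega) (by omega) h
  · have := hsucc _ c hc
    rwa [show j - 1 - (k + 1) + 1 = j - 1 - k by omega] at this
  · have := hsucc _ c hc
    rw [show j - 1 - 0 + 1 = j by omega] at this
    simpa [show j - 1 - (j - 1 - i) = i by omega] using this.trans hrij.symm

theorem GuardedSelection.exists_ssuperset (hzz : ZigZag l q Elem) (hD : D.Finite)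
    (hx : x ∈ freeFacts l q D) (hP : GuardedSelection l q D P) (hy : Unrepresented l D P y) :
    ∃ P', GuardedSelection l q D P' ∧ P ⊂ P' := by
  by_cases hins : ∃ y, Unrepresented l D P y ∧
      ∃ u ∈ freeFacts l q D, keyEq l y u ∧ Guarded l q D (P ∪ {u}) u
  · obtain ⟨z, hz, u, hu, hzu, hg⟩ := hins
    have hnew : ∀ w ∈ ({u} : Set _), ∀ p ∈ P, ¬ keyEq l w p := by
      rintro w rfl p hp h
      exact hz.2 p hp (hzu.trans h)
    refine ⟨P ∪ {u}, hP.union (Set.singleton_subset_iff.2 hu) ?_ hnew ?_,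
      ssubset_union_of_forall_not_keyEq rfl (hnew u rfl)⟩
    · rintro a rfl b rfl -
      rfl
    · rintro w rfl
      exact hg
  push Not at hins
  choose! σ hσ hσsrc using fun y (hy : Unrepresented l D P y) =>
    (exists_guarded_or_forall_sources_keyEq hzz hx hP hy).resolve_left
      fun ⟨u, hu, hyu, hg⟩ => hins y hy u hu hyu hg
  exact hP.exists_ssuperset_of_forall_sources_keyEq hD hx hy σ hσ hσsrc

theorem repair_of_forall_exists_keyEq {r : Set (Fin n → Elem)} (hrD : r ⊆ D)
    (hr : Consistent l r) (hcov : ∀ y ∈ D, ∃ p ∈ r, keyEq l y p) : Repair l D r := by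
  refine ⟨hrD, hr, fun s hrs hsD hs => Set.Subset.antisymm (fun y hy => ?_) hrs⟩
  obtain ⟨p, hp, hyp⟩ := hcov y (hsD hy)
  rwa [hs y hy p (hrs hp) hyp]

theorem exists_maximal_guardedSelection (hD : D.Finite) :
    ∃ P, Maximal (GuardedSelection l q D) P :=
  (hD.finite_subsets.subset fun _ hP => hP.1.trans fun _ ha => ha.1).exists_maximal
    ⟨∅, Set.empty_subset _, fun _ ha => ha.elim, fun _ hp => hp.elim⟩

theorem repair_of_maximal_guardedSelection (hzz : ZigZag l q Elem) (hD : D.Finite)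
    (hx : x ∈ freeFacts l q D) (hP : Maximal (GuardedSelection l q D) P) : Repair l D P := by
  refine repair_of_forall_exists_keyEq (hP.prop.1.trans fun _ ha => ha.1) hP.prop.2.1
    fun y hy => ?_
  by_contra! hrep
  obtain ⟨P', hP', hPP'⟩ := hP.prop.exists_ssuperset hzz hD hx ⟨hy, hrep⟩
  exact hPP'.2 (hP.2 hP' hPP'.1)

end CQA

theorem zigzag_certain_singleton_general (n l : ℕ)
    (Elem Var : Type)
    (q : CQA.Query n Var) (hzz : CQA.ZigZag l q Elem)
    (D : Set (Fin n → Elem)) (hD : D.Finite) (hcert : CQA.Certain l q D)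
    (r : Set (Fin n → Elem)) (hr : CQA.Repair l D r) :
    ∃ a ∈ r, {a} ∈ CQA.Delta l 2 q D := by
  by_contra! hfree
  obtain ⟨a, -, ha, -⟩ := hcert r hr
  obtain ⟨P, hP⟩ := CQA.exists_maximal_guardedSelection (l := l) (q := q) hD
  exact hP.prop.not_sat
    (hcert P (CQA.repair_of_maximal_guardedSelection hzz hD ⟨hr.1 ha, hfree a ha⟩ hP))

/-- for a query with the zig-zag property, if `D ⊨ certain(q)` then every
repair of `D` contains a fact `a` with `{a} ∈ Δ₂(q,D)`. -/
theorem zigzag_certain_singleton (n l : ℕ) (hn : 1 ≤ n) (hl : l ≤ n)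
    (Elem Var : Type) [Countable Elem] [Infinite Elem] [Countable Var] [Infinite Var]
    (q : CQA.Query n Var) (hzz : CQA.ZigZag l q Elem)
    (D : Set (Fin n → Elem)) (hD : D.Finite) (hcert : CQA.Certain l q D)
    (r : Set (Fin n → Elem)) (hr : CQA.Repair l D r) :
    ∃ a ∈ r, {a} ∈ CQA.Delta l 2 q D :=
  zigzag_certain_singleton_general n l Elem Var q hzz D hD hcert r hr
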